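/- Let {π^i_j : B_i → B_{ij}} be a family of surjective algebra homomorphisms satisfying: for all distinct i,j,k and all compatible pairs (b_i, b_j) with π^i_j(b_i) = π^j_i(b_j), there exists b_k ∈ B_k compatible with both. Then the cocycle identity φ^{ik}_j = φ^{ij}_k ∘ φ^{jk}_i holds for all distinct i,j,k. -/

import Mathlib

/-!
Each hypothesis of the cocycle identity says that a pair becomes compatible after a kernel
correction: `(b_i - x, b_j)` on `ij` with `x ∈ ker π^i_k`, and `(b_j - y, b_k)` on `jk` with
`y ∈ ker π^j_i`. Extending the compatible pair `(b_i - x, b_j - y)` gives `b_k'`, and then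
`(0, b_k' - b_k)` is compatible on `jk`. Extending that pair yields `b_i'' ∈ ker π^i_j` with
`π^i_k(b_i'') = π^k_i(b_k' - b_k) = π^i_k(b_i) - π^k_i(b_k)`.
-/
open Function

/-- A set of ideals *generates a distributive lattice* iff it is contained in a
distributive sublattice of the lattice of ideals. -/
def GeneratesDistribLattice {A : Type*} [CommRing A] (s : Set (Ideal A)) : Prop :=
  ∃ L : Sublattice (Ideal A), (∀ I ∈ s, I ∈ L) ∧
    ∀ x ∈ L, ∀ y ∈ L, ∀ z ∈ L, x ⊓ (y ⊔ z) = (x ⊓ y) ⊔ (x ⊓ z)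

variable {J : Type*}

/-- Compatibility of `b i` and `b j`: `π^i_j (b i) = π^j_i (b j)`, where the
identification `B_{ij} = B_{ji}` is witnessed by the ring isomorphisms `e`. -/
def Compat (B : J → Type*) [∀ i, CommRing (B i)] (C : J → J → Type*)
    [∀ i j, CommRing (C i j)] (π : ∀ i j, B i →+* C i j)
    (e : ∀ i j, C i j ≃+* C j i) (i j : J) (bi : B i) (bj : B j) : Prop :=
  π i j bi = e j i (π j i bj)

/-- A *distributive family*: all the homomorphisms `π^i_j` are surjective and, for each
`i`, the kernels `ker π^i_j` generate a distributive lattice of ideals of `B i`. -/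
def DistribFamily (B : J → Type*) [∀ i, CommRing (B i)] (C : J → J → Type*)
    [∀ i j, CommRing (C i j)] (π : ∀ i j, B i →+* C i j) : Prop :=
  (∀ i j, i ≠ j → Surjective (π i j)) ∧
  ∀ i : J, GeneratesDistribLattice {I : Ideal (B i) | ∃ j, j ≠ i ∧ I = RingHom.ker (π i j)}

/-- The first cocycle condition: `π^i_j (ker π^i_k) = π^j_i (ker π^j_k)` for all
distinct `i, j, k` (the right-hand side is transported to `C i j` by `e`). -/
def Cocycle1 (B : J → Type*) [∀ i, CommRing (B i)] (C : J → J → Type*)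
    [∀ i j, CommRing (C i j)] (π : ∀ i j, B i →+* C i j)
    (e : ∀ i j, C i j ≃+* C j i) : Prop :=
  ∀ i j k : J, i ≠ j → i ≠ k → j ≠ k →
    Ideal.map (π i j) (RingHom.ker (π i k)) =
      Ideal.map ((e j i).toRingHom.comp (π j i)) (RingHom.ker (π j k))

/-- The second cocycle condition `φ^{ik}_j = φ^{ij}_k ∘ φ^{jk}_i`, expressed elementwise
via the characterization
`φ^{ij}_k ([b_j]^j_{ik}) = [b_i]^i_{jk} ↔ π^i_j(b_i) - π^j_i(b_j) ∈ π^i_j(ker π^i_k)`. -/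
def Cocycle2 (B : J → Type*) [∀ i, CommRing (B i)] (C : J → J → Type*)
    [∀ i j, CommRing (C i j)] (π : ∀ i j, B i →+* C i j)
    (e : ∀ i j, C i j ≃+* C j i) : Prop :=
  ∀ i j k : J, i ≠ j → i ≠ k → j ≠ k → ∀ (bi : B i) (bj : B j) (bk : B k),
    π j k bj - e k j (π k j bk) ∈ Ideal.map (π j k) (RingHom.ker (π j i)) →
    π i j bi - e j i (π j i bj) ∈ Ideal.map (π i j) (RingHom.ker (π i k)) →
    π i k bi - e k i (π k i bk) ∈ Ideal.map (π i k) (RingHom.ker (π i j))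

/-- The cocycle condition of Calow–Matthes. -/
def CocycleCondition (B : J → Type*) [∀ i, CommRing (B i)] (C : J → J → Type*)
    [∀ i j, CommRing (C i j)] (π : ∀ i j, B i →+* C i j)
    (e : ∀ i j, C i j ≃+* C j i) : Prop :=
  Cocycle1 B C π e ∧ Cocycle2 B C π e

/-- The two-element extension property: every compatible pair `(b_i, b_j)` extends by
some `b_k` compatible with both. -/
def ExtendsPairs (B : J → Type*) [∀ i, CommRing (B i)] (C : J → J → Type*)
    [∀ i j, CommRing (C i j)] (π : ∀ i j, B i →+* C i j)
    (e : ∀ i j, C i j ≃+* C j i) : Prop :=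
  ∀ i j k : J, i ≠ j → i ≠ k → j ≠ k → ∀ (bi : B i) (bj : B j),
    Compat B C π e i j bi bj →
    ∃ bk : B k, Compat B C π e i k bi bk ∧ Compat B C π e j k bj bk

section

variable {B : J → Type*} [∀ i, CommRing (B i)] {C : J → J → Type*} [∀ i j, CommRing (C i j)]
  {π : ∀ i j, B i →+* C i j} {e : ∀ i j, C i j ≃+* C j i} {i j k : J}

theorem Compat.sub {a a' : B i} {b b' : B j} (h : Compat B C π e i j a b)
    (h' : Compat B C π e i j a' b') : Compat B C π e i j (a - a') (b - b') := by
  simp only [Compat, map_sub] at *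
  rw [h, h']

theorem compat_zero_left_iff {b : B j} :
    Compat B C π e i j 0 b ↔ b ∈ RingHom.ker (π j i) := by
  rw [Compat, map_zero, eq_comm, map_eq_zero_iff _ (e j i).injective, RingHom.mem_ker]

theorem Compat.symm (he : ∀ i j, e j i = (e i j).symm) {a : B i} {b : B j}
    (h : Compat B C π e i j a b) : Compat B C π e j i b a := by
  rw [Compat, he, RingEquiv.eq_symm_apply, h]

theorem exists_compat_sub_of_mem_map (hsurj : Surjective (π i j)) {I : Ideal (B i)}
    {a : B i} {b : B j} (h : π i j a - e j i (π j i b) ∈ I.map (π i j)) :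
    ∃ x ∈ I, Compat B C π e i j (a - x) b := by
  obtain ⟨x, hx, hxa⟩ := (Ideal.mem_map_iff_of_surjective _ hsurj).mp h
  refine ⟨x, hx, ?_⟩
  rw [Compat, map_sub, hxa, sub_sub_cancel]

/-- Half of the first cocycle condition: `π^k_i (ker π^k_j) ⊆ π^i_k (ker π^i_j)`. -/
theorem ExtendsPairs.map_mem_map_ker (he : ∀ i j, e j i = (e i j).symm)
    (hext : ExtendsPairs B C π e) (hij : i ≠ j) (hik : i ≠ k) (hjk : j ≠ k) {c : B k}
    (hc : c ∈ RingHom.ker (π k j)) :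
    e k i (π k i c) ∈ (RingHom.ker (π i j)).map (π i k) := by
  obtain ⟨a, hja, hka⟩ :=
    hext j k i hjk hij.symm hik.symm 0 c (compat_zero_left_iff.mpr hc)
  rw [← hka.symm he]
  exact Ideal.mem_map_of_mem _ (compat_zero_left_iff.mp hja)

end

/-- the two-element extension property implies the cocycle identity
`φ^{ik}_j = φ^{ij}_k ∘ φ^{jk}_i` (expressed elementwise). -/
theorem stmt3 (B : J → Type*) [∀ i, CommRing (B i)]
    (C : J → J → Type*) [∀ i j, CommRing (C i j)]
    (π : ∀ i j, B i →+* C i j) (e : ∀ i j, C i j ≃+* C j i)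
    (he : ∀ i j, e j i = (e i j).symm)
    (hsurj : ∀ i j, i ≠ j → Surjective (π i j))
    (hext : ExtendsPairs B C π e) :
    Cocycle2 B C π e := by
  intro i j k hij hik hjk bi bj bk hjk_mem hij_mem
  obtain ⟨y, hy, hcompat_jk⟩ := exists_compat_sub_of_mem_map (hsurj j k hjk) hjk_mem
  obtain ⟨x, hx, hcompat_ij⟩ := exists_compat_sub_of_mem_map (hsurj i j hij) hij_mem
  have hpair : Compat B C π e i j (bi - x) (bj - y) := by
    simpa using hcompat_ij.sub (compat_zero_left_iff.mpr hy)
  obtain ⟨bk', hik', hjk'⟩ := hext i j k hij hik hjk _ _ hpair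
  have hker : bk' - bk ∈ RingHom.ker (π k j) :=
    compat_zero_left_iff.mp (by simpa using hjk'.sub hcompat_jk)
  have hdiff : π i k bi - e k i (π k i bk) = e k i (π k i (bk' - bk)) := by
    rw [Compat, map_sub] at hik'
    rw [map_sub, map_sub]
    linear_combination hik' + RingHom.mem_ker.mp hx
  rw [hdiff]
  exact hext.map_mem_map_ker he hij hik hjk hker
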